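/- arXiv:1605.08545 — 4 statements merged into one kernel-verified Lean document; each statement's English description precedes it below -/
import Mathlib

section
/- Let k > 4 and let σ1 ∈ S_k be given by σ1(i) = i+k−2 for i = 1, 2, σ1(i) = k+1−i for 3 ≤ i ≤ k−2, and σ1(i) = i−k+2 for i = k−1, k. Suppose σ ∈ S_k satisfies σ ≤ σ1 in the Bruhat order and D(σ) ∪ D(σ^{−1}) ⊆ {1, k−1, k}. Then σ is one of the following four permutations: (i) σ = σ1; (ii) σ(1) = 1 and σ(i) = k+2−i for 2 ≤ i ≤ k; (iii) σ(i) = k−i for 1 ≤ i ≤ k−1 and σ(k) = k; (iv) σ(1) = 1, σ(k) = k, and σ(i) = k+1−i for 2 ≤ i ≤ k−1. -/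
/-! ## Segments and multisegments -/

structure Segment where
  a : ℤ
  b : ℤ
  nonempty : a ≤ b

namespace Segment

/-- `Δ ≺ Δ'`. -/
def prec (Δ Δ' : Segment) : Prop :=
  Δ.a < Δ'.a ∧ Δ'.a ≤ Δ.b + 1 ∧ Δ.b < Δ'.b

def linked (Δ Δ' : Segment) : Prop := prec Δ Δ' ∨ prec Δ' Δ

/-- `←Δ = [a-1, b-1]`. -/
def shiftl (Δ : Segment) : Segment :=
  ⟨Δ.a - 1, Δ.b - 1, by have := Δ.nonempty; omega⟩

end Segment

abbrev Multisegment := Multiset Segment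

/-- `Step m n` means `m ⊢ n`: `m` is obtained from `n` by replacing a pair of linked
segments of `n` by its offspring. -/
def Step (m n : Multisegment) : Prop :=
  ∃ (Δ Δ' : Segment) (r : Multisegment),
    Segment.prec Δ Δ' ∧ n = Δ ::ₘ Δ' ::ₘ r ∧
    ((Δ'.a ≤ Δ.b ∧ ∃ E F : Segment,
        E.a = Δ.a ∧ E.b = Δ'.b ∧ F.a = Δ'.a ∧ F.b = Δ.b ∧ m = E ::ₘ F ::ₘ r) ∨
     (Δ'.a = Δ.b + 1 ∧ ∃ E : Segment, E.a = Δ.a ∧ E.b = Δ'.b ∧ m = E ::ₘ r))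

/-- `Obt m n` means `m ⊨ n`: reflexive-transitive closure of `⊢`. -/
def Obt : Multisegment → Multisegment → Prop := Relation.ReflTransGen Step

def PairwiseUnlinked (m : Multisegment) : Prop :=
  ∀ (Δ Δ' : Segment) (r : Multisegment), m = Δ ::ₘ Δ' ::ₘ r → ¬ Segment.linked Δ Δ'

/-- `StepN l m n` : there is a chain of `l` steps `m = m_l ⊢ m_{l-1} ⊢ ⋯ ⊢ m_1 ⊢ n`. -/
def StepN : ℕ → Multisegment → Multisegment → Prop
  | 0, m, n => m = n
  | l + 1, m, n => ∃ p, Step m p ∧ StepN l p n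

/-- The complexity `c(m)`: the maximal `l` for which there is a chain of `l` steps ending at `m`. -/
noncomputable def complexity (m : Multisegment) : ℕ :=
  sSup {l : ℕ | ∃ m', StepN l m' m}

/-- Almost pairwise unlinked. -/
def APU (m : Multisegment) : Prop :=
  ∃ m', PairwiseUnlinked m' ∧ Step m' m

/-- The depth `d(m)`: the number of APU multisegments `n` with `n ⊨ m`. -/
noncomputable def depth (m : Multisegment) : ℕ :=
  {n : Multisegment | APU n ∧ Obt n m}.ncard

def Regular (m : Multisegment) : Prop :=
  (m.map Segment.a).Nodup ∧ (m.map Segment.b).Nodup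

def IsBalanced (m : Multisegment) : Prop :=
  Regular m ∧ depth m = complexity m

/-! ## Enumerated multisegments and the (GLS) condition -/

/-- The multisegment `Δ_0 + ⋯ + Δ_{k-1}` attached to an enumeration `Δ : ℕ → Segment`. -/
def msOf (k : ℕ) (Δ : ℕ → Segment) : Multisegment :=
  ↑((List.range k).map Δ)

def Xset (k : ℕ) (Δ : ℕ → Segment) : Set (ℕ × ℕ) :=
  {p | p.1 < k ∧ p.2 < k ∧ (Δ p.1).prec (Δ p.2)}

def Xtil (k : ℕ) (Δ : ℕ → Segment) : Set (ℕ × ℕ) :=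
  {p | p.1 < k ∧ p.2 < k ∧ ((Δ p.1).shiftl).prec (Δ p.2)}

open Classical in
/-- The vector `x_{i,j}(λ) ∈ ℂ^{X̃_m}` (viewed inside the functions `ℕ × ℕ → ℂ`). -/
noncomputable def glsVec (k : ℕ) (Δ : ℕ → Segment) (lam : ℕ → ℕ → ℂ) (i j : ℕ) :
    ℕ × ℕ → ℂ := fun p =>
  (if p.1 = i ∧ (p.2, j) ∈ Xset k Δ ∧ (i, p.2) ∈ Xtil k Δ then lam p.2 j else 0) -
  (if p.2 = j ∧ (p.1, j) ∈ Xtil k Δ ∧ (i, p.1) ∈ Xset k Δ then lam i p.1 else 0)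

/-- Condition (GLS). -/
def GLS (k : ℕ) (Δ : ℕ → Segment) : Prop :=
  ∃ lam : ℕ → ℕ → ℂ,
    LinearIndependent ℂ (fun p : Xset k Δ => glsVec k Δ lam p.1.1 p.1.2)

/-- The relation `⤳` between `X_m` and `X̃_m`. -/
def leadsTo (Δ : ℕ → Segment) (x y : ℕ × ℕ) : Prop :=
  (x.1 = y.1 ∧ (Δ y.2).prec (Δ x.2)) ∨ (x.2 = y.2 ∧ (Δ x.1).prec (Δ y.1))

/-- `N_{i,j} = {y ∈ X̃_m : (i,j) ⤳ y}`. -/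
def Nset (k : ℕ) (Δ : ℕ → Segment) (x : ℕ × ℕ) : Set (ℕ × ℕ) :=
  {y ∈ Xtil k Δ | leadsTo Δ x y}

/-- The labelled relation `x ⤳^r y`. -/
def LabRel (k : ℕ) (Δ : ℕ → Segment) (x r y : ℕ × ℕ) : Prop :=
  (x.1 = y.1 ∧ r = (y.2, x.2) ∧ x ∈ Xset k Δ ∧ r ∈ Xset k Δ ∧ y ∈ Xtil k Δ) ∨
  (x.2 = y.2 ∧ r = (x.1, y.1) ∧ x ∈ Xset k Δ ∧ r ∈ Xset k Δ ∧ y ∈ Xtil k Δ)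

/-- Multisegments of type 4231. -/
def Type4231 (m : Multisegment) : Prop :=
  ∃ (k : ℕ) (Δ : ℕ → Segment), 4 ≤ k ∧ m = msOf k Δ ∧ Regular m ∧
    (∀ i j, i < j → j < k → (Δ j).b < (Δ i).b) ∧
    (∀ i, 2 ≤ i → i + 1 < k → (Δ (i + 1)).prec (Δ i)) ∧
    (Δ 2).prec (Δ 0) ∧
    (Δ (k - 1)).a < (Δ 1).a ∧ (Δ 1).a < (Δ (k - 2)).a

/-- Multisegments of type 3412. -/
def Type3412 (m : Multisegment) : Prop :=
  ∃ (k : ℕ) (Δ : ℕ → Segment), 4 ≤ k ∧ m = msOf k Δ ∧ Regular m ∧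
    (∀ i j, i < j → j < k → (Δ j).b < (Δ i).b) ∧
    (∀ i, 3 ≤ i → i + 1 < k → (Δ (i + 1)).prec (Δ i)) ∧
    (Δ 3).prec (Δ 1) ∧
    (Δ 2).a < (Δ (k - 1)).a ∧ (Δ (k - 1)).a < (Δ 0).a ∧
    (Δ 0).a < (Δ (if k = 4 then 1 else k - 2)).a

/-- `Δ_i` is a detachable segment of `Δ_0 + ⋯ + Δ_{k-1}`. -/
def Detachable (k : ℕ) (Δ : ℕ → Segment) (i : ℕ) : Prop :=
  (∀ j, j < k → j ≠ i → ¬ (Δ i).prec (Δ j) ∧ ¬ ((Δ i).shiftl).prec (Δ j)) ∨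
  (∀ j, j < k → j ≠ i → ¬ (Δ j).prec (Δ i) ∧ ¬ ((Δ j).shiftl).prec (Δ i))

/-! ## Permutations, Bruhat order, smooth pairs -/

/-- The rank function `r_σ(i,j)` (0-based). -/
def rankFn {k : ℕ} (σ : Equiv.Perm (Fin k)) (i j : Fin k) : ℕ :=
  (Finset.univ.filter fun u : Fin k => u ≤ i ∧ σ u ≤ j).card

/-- The Bruhat order, via the rank-function characterization. -/
def BruhatLE {k : ℕ} (τ σ : Equiv.Perm (Fin k)) : Prop :=
  ∀ i j : Fin k, rankFn σ i j ≤ rankFn τ i j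

/-- The length `ℓ(σ)`. -/
def lenPerm {k : ℕ} (σ : Equiv.Perm (Fin k)) : ℕ :=
  (Finset.univ.filter fun p : Fin k × Fin k => p.1 < p.2 ∧ σ p.2 < σ p.1).card

def IsTransposition {k : ℕ} (t : Equiv.Perm (Fin k)) : Prop :=
  ∃ i j : Fin k, i ≠ j ∧ t = Equiv.swap i j

/-- `(σ, σ0)` is a smooth pair. -/
def SmoothPair {k : ℕ} (σ0 σ : Equiv.Perm (Fin k)) : Prop :=
  BruhatLE σ0 σ ∧
    {t : Equiv.Perm (Fin k) | IsTransposition t ∧ BruhatLE (σ0 * t) σ}.ncard = lenPerm σ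

/-- The ascent set `D(σ)` of a permutation, in 1-based indexing. -/
def Dset {k : ℕ} (σ : Equiv.Perm (Fin k)) : Set ℕ :=
  {i | ∃ (h1 : 1 ≤ i) (h2 : i < k), (σ ⟨i - 1, by omega⟩ : ℕ) < (σ ⟨i, h2⟩ : ℕ)} ∪ {k}

/-- The flattened permutation `rmv_i(σ)`. -/
def rmv {k : ℕ} (σ : Equiv.Perm (Fin (k + 1))) (i : Fin (k + 1)) : Equiv.Perm (Fin k) :=
  ((finSuccAboveEquiv i).trans
    (σ.subtypeEquiv fun x => not_congr (EmbeddingLike.apply_eq_iff_eq σ).symm)).trans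
    (finSuccAboveEquiv (σ i)).symm

/-! ## Bi-sequences -/

structure BiSeq (k : ℕ) where
  a : Fin k → ℤ
  b : Fin k → ℤ
  mono_a : Monotone a
  anti_b : Antitone b
  compat : ∀ i : Fin k, a i.rev ≤ b i + 1

def RegularBS {k : ℕ} (A : BiSeq k) : Prop := StrictMono A.a ∧ StrictAnti A.b

/-- `σ` satisfies the defining recursion of `σ0(A)`. -/
def Sigma0Spec {k : ℕ} (A : BiSeq k) (σ : Equiv.Perm (Fin k)) : Prop :=
  ∀ i : Fin k,
    A.a (σ.symm i) ≤ A.b i + 1 ∧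
    ∀ j : Fin k, A.a j ≤ A.b i + 1 → (∀ i' : Fin k, i < i' → σ.symm i' ≠ j) →
      j ≤ σ.symm i

def Avoids213 {k : ℕ} (σ : Equiv.Perm (Fin k)) : Prop :=
  ¬ ∃ i j l : Fin k, i < j ∧ j < l ∧ σ j < σ i ∧ σ i < σ l

/-- The multisegment `m_σ(A)`, consisting of the nonempty intervals among
`[a_{σ⁻¹(i)}, b_i]`. -/
def mOf {k : ℕ} (A : BiSeq k) (σ : Equiv.Perm (Fin k)) : Multisegment :=
  ((Finset.univ.filter fun i : Fin k => A.a (σ.symm i) ≤ A.b i).attach.val).map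
    fun i => { a := A.a (σ.symm i.1), b := A.b i.1,
               nonempty := by have := Finset.mem_filter.mp i.2; exact this.2 }

/-! ## Permutation matrices -/

def PermMat {k : ℕ} (σ : Equiv.Perm (Fin k)) : Matrix (Fin k) (Fin k) ℕ :=
  fun i j => if σ i = j then 1 else 0

/-- The equivalence relation generated by `i ∼ j` whenever `M_{i,l} = M_{j,l} = 1` for some `l`. -/
def matRel {k : ℕ} (M : Matrix (Fin k) (Fin k) ℕ) : Fin k → Fin k → Prop :=
  Relation.EqvGen (fun i j => ∃ l, M i l = 1 ∧ M j l = 1)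

/-!
In 1-based terms: the ascent conditions make `σ` decreasing on the positions `2, …, k - 1` and
`σ⁻¹` decreasing on the values `2, …, k - 1`. Comparing rank functions with `σ1` at `(1, k - 1)`
and `(k - 1, 1)` gives `σ(1) ≤ k - 1` and `σ(k) ≠ 1`, and the monotonicity of `σ⁻¹` then leaves
`σ(1) ∈ {1, k - 1}` and `σ(k) ∈ {2, k}`. In each of the four cases `σ` maps the middle positions
decreasingly onto the remaining values, which determines it: for `f` decreasing on a block of
consecutive integers, `f n + n` is antitone there, so bounds at the two ends pin it down.
-/

section PermVal

open Equiv

variable {k : ℕ} {σ τ : Perm (Fin k)}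

/-- `σ` on 0-based positions as a function `ℕ → ℕ` (junk value `0` from `k` on), so that
positions and values can be handled by `omega`. -/
def permVal (σ : Perm (Fin k)) (n : ℕ) : ℕ :=
  if h : n < k then σ ⟨n, h⟩ else 0

lemma permVal_of_lt {n : ℕ} (h : n < k) : permVal σ n = σ ⟨n, h⟩ := dif_pos h

@[simp]
lemma permVal_val (i : Fin k) : permVal σ i = σ i := permVal_of_lt i.2

lemma permVal_lt {n : ℕ} (h : n < k) : permVal σ n < k := by
  rw [permVal_of_lt h]; exact Fin.isLt _

lemma permVal_inj {m n : ℕ} (hm : m < k) (hn : n < k) :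
    permVal σ m = permVal σ n ↔ m = n := by
  rw [permVal_of_lt hm, permVal_of_lt hn, Fin.val_inj, σ.apply_eq_iff_eq, Fin.mk.injEq]

lemma permVal_ne_permVal {m n : ℕ} (hm : m < k) (hn : n < k) (h : m ≠ n) :
    permVal σ m ≠ permVal σ n :=
  (permVal_inj hm hn).not.mpr h

lemma permVal_inv_permVal {n : ℕ} (h : n < k) : permVal σ⁻¹ (permVal σ n) = n := by
  rw [permVal_of_lt h, permVal_val, Perm.inv_def, symm_apply_apply]

lemma permVal_permVal_inv {n : ℕ} (h : n < k) : permVal σ (permVal σ⁻¹ n) = n := by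
  simpa using permVal_inv_permVal (σ := σ⁻¹) h

lemma exists_permVal_eq {v : ℕ} (h : v < k) : ∃ n < k, permVal σ n = v :=
  ⟨_, permVal_lt h, permVal_permVal_inv h⟩

lemma permVal_succ_lt_of_succ_notMem_Dset {n : ℕ} (h : n + 1 < k) (hn : n + 1 ∉ Dset σ) :
    permVal σ (n + 1) < permVal σ n := by
  have hne : permVal σ (n + 1) ≠ permVal σ n := permVal_ne_permVal h (by omega) (by omega)
  refine lt_of_le_of_ne (not_lt.mp fun hlt => hn (Or.inl ⟨by omega, h, ?_⟩)) hne
  rwa [permVal_of_lt h, permVal_of_lt (by omega)] at hlt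

lemma permVal_succ_lt_of_Dset_subset (hD : Dset σ ⊆ ({1, k - 1, k} : Set ℕ)) {n : ℕ}
    (h1 : 1 ≤ n) (h2 : n + 1 ≤ k - 2) : permVal σ (n + 1) < permVal σ n :=
  permVal_succ_lt_of_succ_notMem_Dset (by omega) fun hn => by
    have := hD hn
    simp only [Set.mem_insert_iff, Set.mem_singleton_iff] at this
    omega

lemma antitoneOn_permVal_add_self (hD : Dset σ ⊆ ({1, k - 1, k} : Set ℕ)) :
    AntitoneOn (fun n => permVal σ n + n) (Set.Icc 1 (k - 2)) :=
  antitoneOn_of_succ_le Set.ordConnected_Icc fun n _ hn hn1 => by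
    have := permVal_succ_lt_of_Dset_subset hD hn.1 (Order.succ_eq_add_one n ▸ hn1.2)
    simp only [Order.succ_eq_add_one]
    omega

lemma permVal_add_self_eq_of_le_of_le (hD : Dset σ ⊆ ({1, k - 1, k} : Set ℕ)) {l r c n : ℕ}
    (hl : 1 ≤ l) (hr : r ≤ k - 2) (hlc : permVal σ l + l ≤ c) (hrc : c ≤ permVal σ r + r)
    (hln : l ≤ n) (hnr : n ≤ r) : permVal σ n + n = c := by
  have hanti := antitoneOn_permVal_add_self hD
  have : permVal σ n + n ≤ permVal σ l + l := hanti ⟨hl, by omega⟩ ⟨by omega, by omega⟩ hln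
  have : permVal σ r + r ≤ permVal σ n + n := hanti ⟨by omega, by omega⟩ ⟨by omega, hr⟩ hnr
  omega

lemma BruhatLE.exists_permVal_le (h : BruhatLE τ σ) {i j : ℕ} (hi : i < k) (hj : j < k)
    (hij : permVal σ i ≤ j) : ∃ u ≤ i, permVal τ u ≤ j := by
  have hσ : 0 < rankFn σ ⟨i, hi⟩ ⟨j, hj⟩ :=
    Finset.card_pos.mpr ⟨⟨i, hi⟩, by simpa [Fin.le_def, ← permVal_of_lt hi] using hij⟩
  obtain ⟨u, hu⟩ := Finset.card_pos.mp (hσ.trans_le (h _ _))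
  simp only [Finset.mem_filter, Finset.mem_univ, true_and, Fin.le_def] at hu
  exact ⟨u, hu.1, by simpa using hu.2⟩

lemma permVal_zero_eq_zero_or_eq_sub_two (hk : 0 < k)
    (hD : Dset σ⁻¹ ⊆ ({1, k - 1, k} : Set ℕ)) (h : permVal σ 0 ≤ k - 2) :
    permVal σ 0 = 0 ∨ permVal σ 0 = k - 2 := by
  by_contra! hv
  have := permVal_succ_lt_of_Dset_subset hD (n := permVal σ 0) (by omega) (by omega)
  rw [permVal_inv_permVal hk] at this
  omega

lemma permVal_last_eq_one_or_eq_sub_one (hk : 0 < k)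
    (hD : Dset σ⁻¹ ⊆ ({1, k - 1, k} : Set ℕ)) (h : permVal σ (k - 1) ≠ 0) :
    permVal σ (k - 1) = 1 ∨ permVal σ (k - 1) = k - 1 := by
  have : permVal σ (k - 1) < k := permVal_lt (by omega)
  by_contra! hv
  have := permVal_succ_lt_of_Dset_subset hD (n := permVal σ (k - 1) - 1) (by omega) (by omega)
  rw [Nat.sub_add_cancel (by omega), permVal_inv_permVal (by omega)] at this
  have := permVal_lt (σ := σ⁻¹) (n := permVal σ (k - 1) - 1) (by omega)
  omega

end PermVal

section FourCases

variable {k : ℕ} {σ : Equiv.Perm (Fin k)}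

lemma permVal_of_first_eq_zero_of_last_eq_one (hk : 2 < k)
    (hD : Dset σ ⊆ ({1, k - 1, k} : Set ℕ)) (h0 : permVal σ 0 = 0) (hl : permVal σ (k - 1) = 1) :
    ∀ n < k, permVal σ n + 1 = if n + 1 = 1 then 1 else k + 2 - (n + 1) := by
  have hmid : ∀ n, 1 ≤ n → n ≤ k - 2 → permVal σ n + n = k := by
    refine fun n => permVal_add_self_eq_of_le_of_le hD le_rfl le_rfl ?_ ?_
    · have : permVal σ 1 < k := permVal_lt (by omega)
      omega
    · have : permVal σ (k - 2) ≠ permVal σ 0 := permVal_ne_permVal (by omega) (by omega) (by omega)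
      have : permVal σ (k - 2) ≠ permVal σ (k - 1) :=
        permVal_ne_permVal (by omega) (by omega) (by omega)
      omega
  intro n hn
  have := hmid n
  rcases (by omega : n = 0 ∨ n = k - 1 ∨ 1 ≤ n ∧ n ≤ k - 2) with rfl | rfl | _ <;>
    split_ifs <;> omega

lemma permVal_of_first_eq_zero_of_last_eq_sub_one (hk : 2 < k)
    (hD : Dset σ ⊆ ({1, k - 1, k} : Set ℕ)) (h0 : permVal σ 0 = 0)
    (hl : permVal σ (k - 1) = k - 1) :
    ∀ n < k, permVal σ n + 1 =
      if n + 1 = 1 then 1 else if n + 1 = k then k else k + 1 - (n + 1) := by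
  have hmid : ∀ n, 1 ≤ n → n ≤ k - 2 → permVal σ n + n = k - 1 := by
    refine fun n => permVal_add_self_eq_of_le_of_le hD le_rfl le_rfl ?_ ?_
    · have : permVal σ 1 < k := permVal_lt (by omega)
      have : permVal σ 1 ≠ permVal σ (k - 1) := permVal_ne_permVal (by omega) (by omega) (by omega)
      omega
    · have : permVal σ (k - 2) ≠ permVal σ 0 := permVal_ne_permVal (by omega) (by omega) (by omega)
      omega
  intro n hn
  have := hmid n
  rcases (by omega : n = 0 ∨ n = k - 1 ∨ 1 ≤ n ∧ n ≤ k - 2) with rfl | rfl | _ <;>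
    split_ifs <;> omega

lemma permVal_of_first_eq_sub_two_of_last_eq_sub_one (hk : 2 < k)
    (hD : Dset σ ⊆ ({1, k - 1, k} : Set ℕ)) (h0 : permVal σ 0 = k - 2)
    (hl : permVal σ (k - 1) = k - 1) :
    ∀ n < k, permVal σ n + 1 = if n + 1 = k then k else k - (n + 1) := by
  have hmid : ∀ n, 1 ≤ n → n ≤ k - 2 → permVal σ n + n = k - 2 := by
    refine fun n => permVal_add_self_eq_of_le_of_le hD le_rfl le_rfl ?_ (by omega)
    have : permVal σ 1 < k := permVal_lt (by omega)
    have : permVal σ 1 ≠ permVal σ 0 := permVal_ne_permVal (by omega) (by omega) (by omega)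
    have : permVal σ 1 ≠ permVal σ (k - 1) := permVal_ne_permVal (by omega) (by omega) (by omega)
    omega
  intro n hn
  have := hmid n
  rcases (by omega : n = 0 ∨ n = k - 1 ∨ 1 ≤ n ∧ n ≤ k - 2) with rfl | rfl | _ <;>
    split_ifs <;> omega

lemma permVal_of_first_eq_sub_two_of_last_eq_one (hk : 3 < k)
    (hD : Dset σ ⊆ ({1, k - 1, k} : Set ℕ)) (h0 : permVal σ 0 = k - 2)
    (hl : permVal σ (k - 1) = 1) :
    ∀ n < k, permVal σ n + 1 =
      if n + 1 ≤ 2 then n + 1 + k - 2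
      else if n + 1 ≤ k - 2 then k + 1 - (n + 1)
      else n + 1 + 2 - k := by
  have hanti := antitoneOn_permVal_add_self hD
  -- The middle values are not an interval: `k - 1` and `0` are forced to the ends of the block.
  have h1 : permVal σ 1 = k - 1 := by
    obtain ⟨p, hpk, hp⟩ := exists_permVal_eq (σ := σ) (v := k - 1) (by omega)
    rcases (by omega : p = 0 ∨ p = k - 1 ∨ 1 ≤ p ∧ p ≤ k - 2) with rfl | rfl | ⟨hp1, hp2⟩
    · omega
    · omega
    · have : permVal σ p + p ≤ permVal σ 1 + 1 := hanti ⟨le_rfl, by omega⟩ ⟨hp1, hp2⟩ hp1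
      have : permVal σ 1 < k := permVal_lt (by omega)
      omega
  have h2 : permVal σ (k - 2) = 0 := by
    obtain ⟨q, hqk, hq⟩ := exists_permVal_eq (σ := σ) (v := 0) (by omega)
    rcases (by omega : q = 0 ∨ q = k - 1 ∨ 1 ≤ q ∧ q ≤ k - 2) with rfl | rfl | ⟨hq1, hq2⟩
    · omega
    · omega
    · have : permVal σ (k - 2) + (k - 2) ≤ permVal σ q + q :=
        hanti ⟨hq1, hq2⟩ ⟨by omega, le_rfl⟩ hq2
      omega
  have hmid : ∀ n, 2 ≤ n → n ≤ k - 3 → permVal σ n + n = k - 1 := by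
    refine fun n => permVal_add_self_eq_of_le_of_le hD (by omega) (by omega) ?_ ?_
    · have : permVal σ 2 < k := permVal_lt (by omega)
      have : permVal σ 2 ≠ permVal σ 0 := permVal_ne_permVal (by omega) (by omega) (by omega)
      have : permVal σ 2 ≠ permVal σ 1 := permVal_ne_permVal (by omega) (by omega) (by omega)
      omega
    · have : permVal σ (k - 3) ≠ permVal σ (k - 2) :=
        permVal_ne_permVal (by omega) (by omega) (by omega)
      have : permVal σ (k - 3) ≠ permVal σ (k - 1) :=
        permVal_ne_permVal (by omega) (by omega) (by omega)
      omega
  intro n hn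
  have := hmid n
  rcases (by omega : n = 0 ∨ n = 1 ∨ n = k - 2 ∨ n = k - 1 ∨ 2 ≤ n ∧ n ≤ k - 3) with
    rfl | rfl | rfl | rfl | _ <;> split_ifs <;> omega

end FourCases

theorem statement14 (k : ℕ) (hk : 4 < k) (σ1 σ : Equiv.Perm (Fin k))
    (hσ1 : ∀ i : Fin k, (σ1 i : ℕ) + 1 =
      if (i : ℕ) + 1 ≤ 2 then (i : ℕ) + 1 + k - 2
      else if (i : ℕ) + 1 ≤ k - 2 then k + 1 - ((i : ℕ) + 1)
      else (i : ℕ) + 1 + 2 - k)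
    (hle : BruhatLE σ σ1)
    (hD : Dset σ ∪ Dset σ⁻¹ ⊆ ({1, k - 1, k} : Set ℕ)) :
    σ = σ1 ∨
    (∀ i : Fin k, (σ i : ℕ) + 1 =
      if (i : ℕ) + 1 = 1 then 1 else k + 2 - ((i : ℕ) + 1)) ∨
    (∀ i : Fin k, (σ i : ℕ) + 1 =
      if (i : ℕ) + 1 = k then k else k - ((i : ℕ) + 1)) ∨
    (∀ i : Fin k, (σ i : ℕ) + 1 =
      if (i : ℕ) + 1 = 1 then 1
      else if (i : ℕ) + 1 = k then k
      else k + 1 - ((i : ℕ) + 1)) := by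
  obtain ⟨hDσ, hDinv⟩ := Set.union_subset_iff.mp hD
  have hσ1_val (n : ℕ) (hn : n < k) := hσ1 ⟨n, hn⟩
  simp only [← permVal_of_lt] at hσ1_val
  have hfirst : permVal σ 0 ≤ k - 2 := by
    obtain ⟨u, hu, hσu⟩ := hle.exists_permVal_le (i := 0) (j := k - 2) (by omega) (by omega)
      (by have := hσ1_val 0 (by omega); split_ifs at this <;> omega)
    rwa [Nat.le_zero.mp hu] at hσu
  have hlast : permVal σ (k - 1) ≠ 0 := by
    obtain ⟨u, hu, hσu⟩ := hle.exists_permVal_le (i := k - 2) (j := 0) (by omega) (by omega)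
      (by have := hσ1_val (k - 2) (by omega); split_ifs at this <;> omega)
    have : permVal σ u ≠ permVal σ (k - 1) := permVal_ne_permVal (by omega) (by omega) (by omega)
    omega
  have ofPermVal {F : ℕ → ℕ} (h : ∀ n < k, permVal σ n + 1 = F n) (i : Fin k) :
      (σ i : ℕ) + 1 = F i := permVal_val (σ := σ) i ▸ h i i.2
  rcases permVal_zero_eq_zero_or_eq_sub_two (by omega) hDinv hfirst with h0 | h0 <;>
    rcases permVal_last_eq_one_or_eq_sub_one (by omega) hDinv hlast with hl | hl
  · exact Or.inr (Or.inl (ofPermVal (permVal_of_first_eq_zero_of_last_eq_one (by omega) hDσ h0 hl)))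
  · exact Or.inr (Or.inr (Or.inr
      (ofPermVal (permVal_of_first_eq_zero_of_last_eq_sub_one (by omega) hDσ h0 hl))))
  · refine Or.inl (Equiv.ext fun i => Fin.ext ?_)
    have := ofPermVal (permVal_of_first_eq_sub_two_of_last_eq_one (by omega) hDσ h0 hl) i
    have := hσ1 i
    omega
  · exact Or.inr (Or.inr (Or.inl
      (ofPermVal (permVal_of_first_eq_sub_two_of_last_eq_sub_one (by omega) hDσ h0 hl))))
end

section
/- If a regular multisegment m is of type 4231 or of type 3412, then m does not satisfy condition (GLS). -/
/-!
A link `Δ_i ≺ Δ_j` of a regular multisegment such that no segment of `m` has both endpoints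
strictly between those of `Δ_i` and `Δ_j` is "minimal": for it the vector `x_{i,j}(λ)` reduces to
`λ_{i,j} (e_{i,i} - e_{j,j})`. All these vectors lie in the span of the `k - 1` differences
`e_{i,i} - e_{i₀,i₀}`, so fewer than `k` minimal links can have linearly independent vectors.
A multisegment of type 4231 or 3412 with `k` segments has `k` minimal links: the chain
`Δ_{i+1} ≺ Δ_i` together with three more links closing it up.
-/

theorem card_lt_of_linearIndependent_smul_sub {K M ι κ : Type*} [Field K] [AddCommGroup M]
    [Module K M] [Fintype ι] [Nonempty ι]
    {v : ι → M} (hli : LinearIndependent K v) (w : κ → M) (s : Finset κ)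
    (hv : ∀ t, ∃ a ∈ s, ∃ b ∈ s, ∃ c : K, v t = c • (w a - w b)) :
    Fintype.card ι < s.card := by
  classical
  obtain ⟨a₀, ha₀, -⟩ := hv (Classical.arbitrary ι)
  set u := (s.erase a₀).image fun a => w a - w a₀
  have hsub : ∀ a ∈ s, w a - w a₀ ∈ Submodule.span K (u : Set M) := by
    intro a ha
    rcases eq_or_ne a a₀ with rfl | hne
    · simp
    · exact Submodule.subset_span (Finset.mem_image_of_mem _ (Finset.mem_erase.2 ⟨hne, ha⟩))
  have hspan : Set.range v ≤ Submodule.span K (u : Set M) := by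
    rintro _ ⟨t, rfl⟩
    obtain ⟨a, ha, b, hb, c, hvt⟩ := hv t
    rw [hvt, show w a - w b = (w a - w a₀) - (w b - w a₀) by abel]
    exact Submodule.smul_mem _ _ (Submodule.sub_mem _ (hsub a ha) (hsub b hb))
  calc Fintype.card ι ≤ u.card := by
        simpa using linearIndependent_le_span_aux' v hli (u : Set M) hspan
    _ ≤ (s.erase a₀).card := Finset.card_image_le
    _ < s.card := Finset.card_erase_lt_of_mem ha₀

lemma Segment.shiftl_prec_iff (D E : Segment) :
    D.shiftl.prec E ↔ D.a ≤ E.a ∧ E.a ≤ D.b ∧ D.b ≤ E.b := by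
  simp only [Segment.shiftl, Segment.prec]
  omega

lemma Segment.shiftl_prec_self (D : Segment) : D.shiftl.prec D := by
  have := D.nonempty
  rw [Segment.shiftl_prec_iff]
  omega

def MinimalPrec (m : Multisegment) (D D' : Segment) : Prop :=
  D ∈ m ∧ D' ∈ m ∧ D.prec D' ∧ ∀ E ∈ m, ¬ (D.a < E.a ∧ E.a < D'.a ∧ D.b < E.b ∧ E.b < D'.b)

section Enumeration

variable {k : ℕ} {Δ : ℕ → Segment}

@[simp]
lemma card_msOf : Multiset.card (msOf k Δ) = k := by
  simp [msOf]

lemma mem_msOf {D : Segment} : D ∈ msOf k Δ ↔ ∃ i < k, Δ i = D := by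
  simp [msOf]

lemma injOn_of_nodup_map_msOf {f : Segment → ℤ} (h : ((msOf k Δ).map f).Nodup) :
    Set.InjOn (fun i => f (Δ i)) (Set.Iio k) := by
  simp only [msOf, Multiset.map_coe, Multiset.coe_nodup, List.map_map] at h
  exact fun i hi j hj hij => List.inj_on_of_nodup_map h (by simpa using hi) (by simpa using hj) hij

lemma Regular.injOn_a (h : Regular (msOf k Δ)) : Set.InjOn (fun i => (Δ i).a) (Set.Iio k) :=
  injOn_of_nodup_map_msOf h.1

lemma Regular.injOn_b (h : Regular (msOf k Δ)) : Set.InjOn (fun i => (Δ i).b) (Set.Iio k) :=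
  injOn_of_nodup_map_msOf h.2

lemma MinimalPrec.eq_left_of_mem_Xset_Xtil (hreg : Regular (msOf k Δ)) {i j r : ℕ} (hi : i < k)
    (h : MinimalPrec (msOf k Δ) (Δ i) (Δ j)) (hrj : (r, j) ∈ Xset k Δ) (hir : (i, r) ∈ Xtil k Δ) :
    r = i := by
  obtain ⟨hr, -, hprec : (Δ r).prec (Δ j)⟩ := hrj
  obtain ⟨-, -, hshift : (Δ i).shiftl.prec (Δ r)⟩ := hir
  by_contra hri
  have ha : (Δ r).a ≠ (Δ i).a := fun e => hri (hreg.injOn_a hr hi e)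
  have hb : (Δ r).b ≠ (Δ i).b := fun e => hri (hreg.injOn_b hr hi e)
  rw [Segment.shiftl_prec_iff] at hshift
  exact h.2.2.2 (Δ r) (mem_msOf.2 ⟨r, hr, rfl⟩) (by unfold Segment.prec at hprec; omega)

lemma MinimalPrec.eq_right_of_mem_Xtil_Xset (hreg : Regular (msOf k Δ)) {i j s : ℕ} (hj : j < k)
    (h : MinimalPrec (msOf k Δ) (Δ i) (Δ j)) (hsj : (s, j) ∈ Xtil k Δ) (his : (i, s) ∈ Xset k Δ) :
    s = j := by
  obtain ⟨hs, -, hshift : (Δ s).shiftl.prec (Δ j)⟩ := hsj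
  obtain ⟨-, -, hprec : (Δ i).prec (Δ s)⟩ := his
  by_contra hsj
  have ha : (Δ s).a ≠ (Δ j).a := fun e => hsj (hreg.injOn_a hs hj e)
  have hb : (Δ s).b ≠ (Δ j).b := fun e => hsj (hreg.injOn_b hs hj e)
  rw [Segment.shiftl_prec_iff] at hshift
  exact h.2.2.2 (Δ s) (mem_msOf.2 ⟨s, hs, rfl⟩) (by unfold Segment.prec at hprec; omega)

lemma glsVec_eq_of_minimalPrec (hreg : Regular (msOf k Δ)) (lam : ℕ → ℕ → ℂ) {i j : ℕ}
    (hi : i < k) (hj : j < k) (h : MinimalPrec (msOf k Δ) (Δ i) (Δ j)) :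
    glsVec k Δ lam i j = lam i j • (Pi.single (i, i) 1 - Pi.single (j, j) 1) := by
  have hij : (i, j) ∈ Xset k Δ := ⟨hi, hj, h.2.2.1⟩
  have hne : i ≠ j := by
    rintro rfl
    exact lt_irrefl _ h.2.2.1.1
  have hii : (i, i) ∈ Xtil k Δ := ⟨hi, hi, Segment.shiftl_prec_self _⟩
  have hjj : (j, j) ∈ Xtil k Δ := ⟨hj, hj, Segment.shiftl_prec_self _⟩
  have hleft : ∀ u v, (u = i ∧ (v, j) ∈ Xset k Δ ∧ (i, v) ∈ Xtil k Δ) ↔ (u = i ∧ v = i) := by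
    rintro u v
    constructor
    · rintro ⟨rfl, hvj, hiv⟩
      exact ⟨rfl, h.eq_left_of_mem_Xset_Xtil hreg hi hvj hiv⟩
    · rintro ⟨rfl, rfl⟩
      exact ⟨rfl, hij, hii⟩
  have hright : ∀ u v, (v = j ∧ (u, j) ∈ Xtil k Δ ∧ (i, u) ∈ Xset k Δ) ↔ (u = j ∧ v = j) := by
    rintro u v
    constructor
    · rintro ⟨rfl, huj, hiu⟩
      exact ⟨h.eq_right_of_mem_Xtil_Xset hreg hj huj hiu, rfl⟩
    · rintro ⟨rfl, rfl⟩
      exact ⟨rfl, hjj, hij⟩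
  ext ⟨u, v⟩
  simp only [glsVec, hleft, hright, Pi.smul_apply, Pi.sub_apply, Pi.single_apply, Prod.mk.injEq,
    smul_eq_mul]
  by_cases hui : u = i ∧ v = i
  · obtain ⟨rfl, rfl⟩ := hui
    simp [hne]
  by_cases huj : u = j ∧ v = j
  · obtain ⟨rfl, rfl⟩ := huj
    simp [hne.symm]
  simp [hui, huj]

lemma GLS.card_lt_of_minimalPrec (hgls : GLS k Δ) (hreg : Regular (msOf k Δ))
    {P : Finset (Segment × Segment)} (hne : P.Nonempty)
    (hP : ∀ p ∈ P, MinimalPrec (msOf k Δ) p.1 p.2) : P.card < k := by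
  obtain ⟨lam, hli⟩ := hgls
  have hidx : ∀ p : P, ∃ i < k, ∃ j < k, Δ i = p.1.1 ∧ Δ j = p.1.2 := fun p => by
    obtain ⟨i, hi, hΔi⟩ := mem_msOf.1 (hP p p.2).1
    obtain ⟨j, hj, hΔj⟩ := mem_msOf.1 (hP p p.2).2.1
    exact ⟨i, hi, j, hj, hΔi, hΔj⟩
  choose i hi j hj hΔi hΔj using hidx
  have hmin : ∀ p : P, MinimalPrec (msOf k Δ) (Δ (i p)) (Δ (j p)) := fun p => by
    rw [hΔi, hΔj]
    exact hP p p.2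
  let ι : P → Xset k Δ := fun p => ⟨(i p, j p), hi p, hj p, (hmin p).2.2.1⟩
  have hι : Function.Injective ι := by
    intro p q hpq
    have hij : i p = i q ∧ j p = j q := Prod.ext_iff.1 (congrArg Subtype.val hpq)
    ext1
    exact Prod.ext (by rw [← hΔi, ← hΔi, hij.1]) (by rw [← hΔj, ← hΔj, hij.2])
  have : Nonempty P := hne.coe_sort
  simpa using card_lt_of_linearIndependent_smul_sub (hli.comp ι hι)
    (fun a => Pi.single (a, a) (1 : ℂ)) (Finset.range k) fun p =>
      ⟨i p, Finset.mem_range.2 (hi p), j p, Finset.mem_range.2 (hj p), lam (i p) (j p),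
        glsVec_eq_of_minimalPrec hreg lam (hi p) (hj p) (hmin p)⟩

lemma minimalPrec_msOf_of_gap (hb : StrictAntiOn (fun i => (Δ i).b) (Set.Iio k)) {i j : ℕ}
    (hi : i < k) (hj : j < k) (hprec : (Δ i).prec (Δ j))
    (hgap : ∀ r, j < r → r < i → ¬ ((Δ i).a < (Δ r).a ∧ (Δ r).a < (Δ j).a)) :
    MinimalPrec (msOf k Δ) (Δ i) (Δ j) := by
  refine ⟨mem_msOf.2 ⟨i, hi, rfl⟩, mem_msOf.2 ⟨j, hj, rfl⟩, hprec, ?_⟩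
  rintro E hE ⟨hia, haj, hib, hbj⟩
  obtain ⟨r, hr, rfl⟩ := mem_msOf.1 hE
  exact hgap r ((hb.lt_iff_gt hr hj).1 hbj) ((hb.lt_iff_gt hi hr).1 hib) ⟨hia, haj⟩

lemma exists_finset_minimalPrec_card_eq (hreg : Regular (msOf k Δ)) (e : ℕ → ℕ × ℕ)
    (he : Set.InjOn e (Set.Iio k)) (hek : ∀ t < k, (e t).1 < k ∧ (e t).2 < k)
    (hmin : ∀ t < k, MinimalPrec (msOf k Δ) (Δ (e t).1) (Δ (e t).2)) :
    ∃ P : Finset (Segment × Segment), P.card = k ∧ ∀ p ∈ P, MinimalPrec (msOf k Δ) p.1 p.2 := by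
  classical
  refine ⟨(Finset.range k).image fun t => (Δ (e t).1, Δ (e t).2), ?_, ?_⟩
  · rw [Finset.card_image_of_injOn, Finset.card_range]
    intro s hs t ht hst
    rw [Finset.coe_range] at hs ht
    have hΔ := Prod.ext_iff.1 hst
    exact he hs ht (Prod.ext (hreg.injOn_a (hek s hs).1 (hek t ht).1 (congrArg Segment.a hΔ.1))
      (hreg.injOn_a (hek s hs).2 (hek t ht).2 (congrArg Segment.a hΔ.2)))
  · simp only [Finset.mem_image, Finset.mem_range]
    rintro _ ⟨t, ht, rfl⟩
    exact hmin t ht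

lemma antitoneOn_a_of_chain {c : ℕ} (hchain : ∀ i, c ≤ i → i + 1 < k → (Δ (i + 1)).prec (Δ i))
    {i j : ℕ} (hci : c ≤ i) (hij : i ≤ j) (hj : j < k) : (Δ j).a ≤ (Δ i).a := by
  induction j, hij using Nat.le_induction with
  | base => exact le_rfl
  | succ j hij ih => exact (hchain j (hci.trans hij) hj).1.le.trans (ih (by omega))

lemma prec_pred_of_chain {c : ℕ} (hchain : ∀ i, c ≤ i → i + 1 < k → (Δ (i + 1)).prec (Δ i))
    {i : ℕ} (hci : c + 1 ≤ i) (hi : i < k) : (Δ i).prec (Δ (i - 1)) := by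
  obtain ⟨j, rfl⟩ : ∃ j, i = j + 1 := ⟨i - 1, by omega⟩
  exact hchain j (by omega) hi

lemma a_bounds_of_type3412 (hk : 4 ≤ k) (hchain : ∀ i, 3 ≤ i → i + 1 < k → (Δ (i + 1)).prec (Δ i))
    (h31 : (Δ 3).prec (Δ 1)) (ha0 : (Δ 0).a < (Δ (if k = 4 then 1 else k - 2)).a) :
    (Δ 0).a < (Δ 1).a ∧ (Δ 0).a ≤ (Δ (k - 1)).b + 1 ∧
      ∀ r, 3 ≤ r → r ≤ k - 2 → (Δ 0).a < (Δ r).a := by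
  split_ifs at ha0 with hk4
  · subst hk4
    exact ⟨ha0, ha0.le.trans h31.2.1, fun r _ _ => by omega⟩
  · have ha0_lt : ∀ r, 3 ≤ r → r ≤ k - 2 → (Δ 0).a < (Δ r).a := fun r h3r hr =>
      ha0.trans_le (antitoneOn_a_of_chain hchain h3r hr (by omega))
    have hlast := prec_pred_of_chain hchain (show 4 ≤ k - 1 by omega) (by omega)
    rw [show k - 1 - 1 = k - 2 by omega] at hlast
    exact ⟨(ha0_lt 3 le_rfl (by omega)).trans h31.1, ha0.le.trans hlast.2.1, ha0_lt⟩

end Enumeration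

theorem Type4231.exists_minimalPrec {m : Multisegment} (h : Type4231 m) :
    ∃ P : Finset (Segment × Segment),
      P.Nonempty ∧ P.card = Multiset.card m ∧ ∀ p ∈ P, MinimalPrec m p.1 p.2 := by
  obtain ⟨k, Δ, hk, rfl, hreg, hb, hchain, h20, ha1, ha2⟩ := h
  have hanti : StrictAntiOn (fun i => (Δ i).b) (Set.Iio k) := fun i _ j hj hij => hb i j hij hj
  have ha1_lt : ∀ r, 2 ≤ r → r ≤ k - 2 → (Δ 1).a < (Δ r).a := fun r h2r hr =>
    ha2.trans_le (antitoneOn_a_of_chain hchain h2r hr (by omega))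
  have h10 : (Δ 1).prec (Δ 0) := by
    have := ha1_lt 2 le_rfl (by omega)
    have := hb 0 1 (by omega) (by omega)
    have := hb 1 2 (by omega) (by omega)
    unfold Segment.prec at h20 ⊢
    omega
  have hk1 : (Δ (k - 1)).prec (Δ 1) := by
    have hlast := prec_pred_of_chain hchain (show 3 ≤ k - 1 by omega) (by omega)
    have := hb 1 (k - 1) (by omega) (by omega)
    rw [show k - 1 - 1 = k - 2 by omega] at hlast
    unfold Segment.prec at hlast ⊢
    omega
  let e : ℕ → ℕ × ℕ := fun t =>
    if t = 0 then (1, 0) else if t = 1 then (2, 0) else if t = k - 1 then (k - 1, 1) else (t + 1, t)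
  obtain ⟨P, hcard, hP⟩ := exists_finset_minimalPrec_card_eq hreg e
    (fun s _ t _ hst => by
      simp only [e] at hst
      split_ifs at hst <;> simp only [Prod.mk.injEq] at hst <;> omega)
    (fun t ht => by simp only [e]; split_ifs <;> dsimp only <;> omega)
    (fun t ht => by
      simp only [e]
      split_ifs <;> dsimp only
      · exact minimalPrec_msOf_of_gap hanti (by omega) (by omega) h10 fun r _ _ => by omega
      · refine minimalPrec_msOf_of_gap hanti (by omega) (by omega) h20 fun r _ _ => ?_
        obtain rfl : r = 1 := by omega
        have := ha1_lt 2 le_rfl (by omega)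
        omega
      · refine minimalPrec_msOf_of_gap hanti (by omega) (by omega) hk1 fun r _ _ => ?_
        have := ha1_lt r (by omega) (by omega)
        omega
      · exact minimalPrec_msOf_of_gap hanti (by omega) (by omega)
          (hchain t (by omega) (by omega)) fun r _ _ => by omega)
  exact ⟨P, Finset.card_pos.1 (by omega), by simp [hcard], hP⟩

theorem Type3412.exists_minimalPrec {m : Multisegment} (h : Type3412 m) :
    ∃ P : Finset (Segment × Segment),
      P.Nonempty ∧ P.card = Multiset.card m ∧ ∀ p ∈ P, MinimalPrec m p.1 p.2 := by
  obtain ⟨k, Δ, hk, rfl, hreg, hb, hchain, h31, ha2, hak, ha0⟩ := h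
  have hanti : StrictAntiOn (fun i => (Δ i).b) (Set.Iio k) := fun i _ j hj hij => hb i j hij hj
  have hak_le : ∀ r, 3 ≤ r → r < k → (Δ (k - 1)).a ≤ (Δ r).a := fun r h3r hr =>
    antitoneOn_a_of_chain hchain h3r (by omega) (by omega)
  obtain ⟨ha01, ha0_le, ha0_lt⟩ := a_bounds_of_type3412 hk hchain h31 ha0
  have h20 : (Δ 2).prec (Δ 0) := by
    have := hb 0 2 (by omega) (by omega)
    have := hb 2 (k - 1) (by omega) (by omega)
    refine ⟨by omega, by omega, by omega⟩
  have h21 : (Δ 2).prec (Δ 1) := by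
    have := hak_le 3 le_rfl (by omega)
    have := hb 1 2 (by omega) (by omega)
    have := hb 2 3 (by omega) (by omega)
    unfold Segment.prec at h31 ⊢
    omega
  have hk0 : (Δ (k - 1)).prec (Δ 0) := ⟨hak, ha0_le, hb 0 (k - 1) (by omega) (by omega)⟩
  let e : ℕ → ℕ × ℕ := fun t =>
    if t = 0 then (2, 0) else if t = 1 then (2, 1) else if t = 2 then (3, 1)
    else if t = k - 1 then (k - 1, 0) else (t + 1, t)
  obtain ⟨P, hcard, hP⟩ := exists_finset_minimalPrec_card_eq hreg e
    (fun s _ t _ hst => by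
      simp only [e] at hst
      split_ifs at hst <;> simp only [Prod.mk.injEq] at hst <;> omega)
    (fun t ht => by simp only [e]; split_ifs <;> dsimp only <;> omega)
    (fun t ht => by
      simp only [e]
      split_ifs <;> dsimp only
      · refine minimalPrec_msOf_of_gap hanti (by omega) (by omega) h20 fun r _ _ => ?_
        obtain rfl : r = 1 := by omega
        omega
      · exact minimalPrec_msOf_of_gap hanti (by omega) (by omega) h21 fun r _ _ => by omega
      · refine minimalPrec_msOf_of_gap hanti (by omega) (by omega) h31 fun r _ _ => ?_
        obtain rfl : r = 2 := by omega
        have := hak_le 3 le_rfl (by omega)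
        omega
      · refine minimalPrec_msOf_of_gap hanti (by omega) (by omega) hk0 fun r _ _ => ?_
        rcases show r = 1 ∨ r = 2 ∨ 3 ≤ r by omega with rfl | rfl | h3r
        · omega
        · omega
        · have := ha0_lt r h3r (by omega)
          omega
      · exact minimalPrec_msOf_of_gap hanti (by omega) (by omega)
          (hchain t (by omega) (by omega)) fun r _ _ => by omega)
  exact ⟨P, Finset.card_pos.1 (by omega), by simp [hcard], hP⟩

theorem statement16 (k : ℕ) (Δ : ℕ → Segment) (hreg : Regular (msOf k Δ))
    (h : Type4231 (msOf k Δ) ∨ Type3412 (msOf k Δ)) :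
    ¬ GLS k Δ := by
  intro hgls
  obtain ⟨P, hne, hcard, hP⟩ := h.elim Type4231.exists_minimalPrec Type3412.exists_minimalPrec
  have := hgls.card_lt_of_minimalPrec hreg hne hP
  simp only [card_msOf] at hcard
  omega
end

section
/- Let m = Δ_1 + ⋯ + Δ_k be a multisegment. If there exists a strong ⤳-matching f : X_m → X̃_m, then m satisfies condition (GLS). -/
theorem statement17 (k : ℕ) (Δ : ℕ → Segment) (f : ℕ × ℕ → ℕ × ℕ)
    (hmatch : ∀ x ∈ Xset k Δ, ∃ r, LabRel k Δ x r (f x))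
    (hinj : Set.InjOn f (Xset k Δ))
    (hstrong : ∃ L : List (ℕ × ℕ), L.Nodup ∧ (∀ x, x ∈ L ↔ x ∈ Xset k Δ) ∧
      ∀ (i j : ℕ) (hi : i < L.length) (hj : j < L.length), i < j →
        ∀ r, (∃ x ∈ Xset k Δ, LabRel k Δ x r (f x)) →
          ¬ LabRel k Δ (L.get ⟨i, hi⟩) r (f (L.get ⟨j, hj⟩))) :
    GLS k Δ := by
  classical
  obtain ⟨L, hnd, hLmem, hstr⟩ := hstrong
  set lam : ℕ → ℕ → ℂ := fun a b =>
    if ∃ x ∈ Xset k Δ, LabRel k Δ x (a, b) (f x) then 1 else 0 with hlam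
  have hprec_irrefl : ∀ D : Segment, ¬ D.prec D := fun D h => absurd h.1 (lt_irrefl _)
  have entry_zero : ∀ y ∈ Xset k Δ, ∀ p : ℕ × ℕ,
      (∀ r, (∃ x' ∈ Xset k Δ, LabRel k Δ x' r (f x')) → ¬ LabRel k Δ y r p) →
      glsVec k Δ lam y.1 y.2 p = 0 := by
    intro y hy p hno
    simp only [glsVec]
    have h1 : (if p.1 = y.1 ∧ (p.2, y.2) ∈ Xset k Δ ∧ (y.1, p.2) ∈ Xtil k Δ
        then lam p.2 y.2 else 0) = 0 := by
      split_ifs with hc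
      · obtain ⟨e1, e2, e3⟩ := hc
        rw [hlam]
        simp only
        rw [if_neg]
        intro hP
        refine hno (p.2, y.2) hP (Or.inl ⟨e1.symm, rfl, hy, e2, ?_⟩)
        have he : (y.1, p.2) = p := by rw [← e1]
        rwa [he] at e3
      · rfl
    have h2 : (if p.2 = y.2 ∧ (p.1, y.2) ∈ Xtil k Δ ∧ (y.1, p.1) ∈ Xset k Δ
        then lam y.1 p.1 else 0) = 0 := by
      split_ifs with hc
      · obtain ⟨e1, e2, e3⟩ := hc
        rw [hlam]
        simp only
        rw [if_neg]
        intro hP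
        refine hno (y.1, p.1) hP (Or.inr ⟨e1.symm, rfl, hy, e3, ?_⟩)
        have he : (p.1, y.2) = p := by rw [← e1]
        rwa [he] at e2
      · rfl
    rw [h1, h2, sub_zero]
  have diag : ∀ x ∈ Xset k Δ,
      glsVec k Δ lam x.1 x.2 (f x) = 1 ∨ glsVec k Δ lam x.1 x.2 (f x) = -1 := by
    intro x hx
    obtain ⟨r, hr⟩ := hmatch x hx
    have hr' := hr
    rcases hr' with ⟨h1, h2, h3, h4, h5⟩ | ⟨h1, h2, h3, h4, h5⟩
    · left
      simp only [glsVec]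
      have hc1 : (f x).1 = x.1 ∧ ((f x).2, x.2) ∈ Xset k Δ ∧ (x.1, (f x).2) ∈ Xtil k Δ := by
        refine ⟨h1.symm, by rwa [← h2], ?_⟩
        have he : (x.1, (f x).2) = f x := by rw [h1]
        rwa [he]
      have hc2 : ¬ ((f x).2 = x.2 ∧ ((f x).1, x.2) ∈ Xtil k Δ ∧ (x.1, (f x).1) ∈ Xset k Δ) := by
        rintro ⟨e1, e2, e3⟩
        rw [← h1] at e3
        exact hprec_irrefl _ e3.2.2
      rw [if_pos hc1, if_neg hc2, sub_zero, hlam]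
      simp only
      rw [if_pos ⟨x, hx, h2 ▸ hr⟩]
    · right
      simp only [glsVec]
      have hc1 : ¬ ((f x).1 = x.1 ∧ ((f x).2, x.2) ∈ Xset k Δ ∧ (x.1, (f x).2) ∈ Xtil k Δ) := by
        rintro ⟨e1, e2, e3⟩
        rw [← h1] at e2
        exact hprec_irrefl _ e2.2.2
      have hc2 : (f x).2 = x.2 ∧ ((f x).1, x.2) ∈ Xtil k Δ ∧ (x.1, (f x).1) ∈ Xset k Δ := by
        refine ⟨h1.symm, ?_, by rwa [← h2]⟩
        have he : ((f x).1, x.2) = f x := by rw [h1]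
        rwa [he]
      rw [if_neg hc1, if_pos hc2, zero_sub, hlam]
      simp only
      rw [if_pos ⟨x, hx, h2 ▸ hr⟩]
  refine ⟨lam, ?_⟩
  rw [linearIndependent_iff']
  intro s g hsum
  have key : ∀ d : ℕ, ∀ j : ℕ, ∀ hj : j < L.length, ∀ x : ↥(Xset k Δ), x ∈ s →
      x.val = L.get ⟨j, hj⟩ → L.length - j ≤ d → g x = 0 := by
    intro d
    induction d with
    | zero =>
      intro j hj x hx hxj hd
      omega
    | succ d ih =>
      intro j hj x hx hxj hd
      have h0 := congrFun hsum (f x.val)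
      rw [Finset.sum_apply] at h0
      have hsingle : ∀ y ∈ s, y ≠ x →
          (g y • glsVec k Δ lam y.val.1 y.val.2) (f x.val) = 0 := by
        intro y hys hyx
        have hyL : y.val ∈ L := (hLmem y.val).mpr y.2
        obtain ⟨⟨i, hi⟩, hgy⟩ := List.mem_iff_get.mp hyL
        rcases lt_trichotomy i j with hlt | heq | hgt
        · have hz : glsVec k Δ lam y.val.1 y.val.2 (f x.val) = 0 := by
            apply entry_zero y.val y.2
            intro r hrf hlab
            exact hstr i j hi hj hlt r hrf (by rwa [hgy, ← hxj])
          simp [hz]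
        · exfalso
          apply hyx
          apply Subtype.ext
          rw [← hgy, hxj]
          simp [heq]
        · have hgy0 : g y = 0 := ih i hi y hys hgy.symm (by omega)
          simp [hgy0]
      rw [Finset.sum_eq_single_of_mem x hx hsingle] at h0
      rcases diag x.val x.2 with hd1 | hd1 <;>
        · simp only [Pi.smul_apply, smul_eq_mul, hd1, Pi.zero_apply, mul_one, mul_neg,
            neg_eq_zero] at h0
          exact h0
  intro x hx
  have hxL : x.val ∈ L := (hLmem x.val).mpr x.2
  obtain ⟨⟨j, hj⟩, hgx⟩ := List.mem_iff_get.mp hxL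
  exact key L.length j hj x hx hgx.symm (Nat.sub_le _ _)
end

section
/- Let m = Δ_1 + ⋯ + Δ_k be a multisegment and suppose Δ_i is a detachable segment of m. If m satisfies condition (GLS), then the multisegment m − Δ_i (obtained by removing Δ_i from the multiset m) also satisfies condition (GLS). -/
/-- The index map skipping `i`. -/
def skipIdx (i j : ℕ) : ℕ := if j < i then j else j + 1

lemma skipIdx_injective (i : ℕ) : Function.Injective (skipIdx i) := by
  intro a b
  unfold skipIdx
  split <;> split <;> omega

lemma skipIdx_ne (i j : ℕ) : skipIdx i j ≠ i := by
  unfold skipIdx; split <;> omega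

lemma skipIdx_surj (i n : ℕ) (hn : n ≠ i) : ∃ m, skipIdx i m = n := by
  rcases lt_or_gt_of_ne hn with h | h
  · exact ⟨n, by unfold skipIdx; split <;> omega⟩
  · exact ⟨n - 1, by unfold skipIdx; split <;> omega⟩

section Aux

variable {k : ℕ} {Δ : ℕ → Segment} {i : ℕ}

lemma delta_skip (j : ℕ) :
    (fun j => if j < i then Δ j else Δ (j + 1)) j = Δ (skipIdx i j) := by
  unfold skipIdx
  by_cases h : j < i <;> simp [h]

lemma mem_Xset_skip (hik : i < k) (p q : ℕ) :
    (p, q) ∈ Xset (k - 1) (fun j => if j < i then Δ j else Δ (j + 1)) ↔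
      (skipIdx i p, skipIdx i q) ∈ Xset k Δ := by
  simp only [Xset, Set.mem_setOf_eq, delta_skip]
  constructor
  · rintro ⟨h1, h2, h3⟩
    refine ⟨?_, ?_, h3⟩ <;> unfold skipIdx <;> split <;> omega
  · rintro ⟨h1, h2, h3⟩
    refine ⟨?_, ?_, h3⟩ <;> revert h1 h2 <;> unfold skipIdx <;> split <;> split <;> omega

lemma mem_Xtil_skip (hik : i < k) (p q : ℕ) :
    (p, q) ∈ Xtil (k - 1) (fun j => if j < i then Δ j else Δ (j + 1)) ↔
      (skipIdx i p, skipIdx i q) ∈ Xtil k Δ := by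
  simp only [Xtil, Set.mem_setOf_eq, delta_skip]
  constructor
  · rintro ⟨h1, h2, h3⟩
    refine ⟨?_, ?_, h3⟩ <;> unfold skipIdx <;> split <;> omega
  · rintro ⟨h1, h2, h3⟩
    refine ⟨?_, ?_, h3⟩ <;> revert h1 h2 <;> unfold skipIdx <;> split <;> split <;> omega

/-- Detachability: no "cross" pairs through `i`. -/
lemma det_key1 (hdet : Detachable k Δ i) (P Q : ℕ) (hP : P ≠ i) (hQ : Q ≠ i) :
    ¬((i, Q) ∈ Xset k Δ ∧ (P, i) ∈ Xtil k Δ) := by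
  rintro ⟨h1, h2⟩
  simp only [Xset, Xtil, Set.mem_setOf_eq] at h1 h2
  rcases hdet with h | h
  · exact (h Q h1.2.1 hQ).1 h1.2.2
  · exact (h P h2.1 hP).2 h2.2.2

lemma det_key2 (hdet : Detachable k Δ i) (P Q : ℕ) (hP : P ≠ i) (hQ : Q ≠ i) :
    ¬((i, Q) ∈ Xtil k Δ ∧ (P, i) ∈ Xset k Δ) := by
  rintro ⟨h1, h2⟩
  simp only [Xset, Xtil, Set.mem_setOf_eq] at h1 h2
  rcases hdet with h | h
  · exact (h Q h1.2.1 hQ).2 h1.2.2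
  · exact (h P h2.1 hP).1 h2.2.2

/-- The big GLS vector at indices avoiding `i` vanishes at coordinates involving `i`. -/
lemma glsVec_supp (hdet : Detachable k Δ i) (lam : ℕ → ℕ → ℂ) (P Q : ℕ)
    (hP : P ≠ i) (hQ : Q ≠ i) (x : ℕ × ℕ) (hx : x.1 = i ∨ x.2 = i) :
    glsVec k Δ lam P Q x = 0 := by
  unfold glsVec
  rcases hx with hx | hx
  · have hA : ¬(x.1 = P ∧ (x.2, Q) ∈ Xset k Δ ∧ (P, x.2) ∈ Xtil k Δ) := by
      rintro ⟨h1, _⟩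
      exact hP (hx ▸ h1).symm
    have hB : ¬(x.2 = Q ∧ (x.1, Q) ∈ Xtil k Δ ∧ (P, x.1) ∈ Xset k Δ) := by
      rintro ⟨h1, h2, h3⟩
      exact det_key2 hdet P Q hP hQ ⟨hx ▸ h2, hx ▸ h3⟩
    rw [if_neg hA, if_neg hB, sub_zero]
  · have hA : ¬(x.1 = P ∧ (x.2, Q) ∈ Xset k Δ ∧ (P, x.2) ∈ Xtil k Δ) := by
      rintro ⟨h1, h2, h3⟩
      exact det_key1 hdet P Q hP hQ ⟨hx ▸ h2, hx ▸ h3⟩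
    have hB : ¬(x.2 = Q ∧ (x.1, Q) ∈ Xtil k Δ ∧ (P, x.1) ∈ Xset k Δ) := by
      rintro ⟨h1, _⟩
      exact hQ (hx ▸ h1).symm
    rw [if_neg hA, if_neg hB, sub_zero]

/-- The small GLS vector is the pullback of the big one. -/
lemma glsVec_pullback (hik : i < k) (lam : ℕ → ℕ → ℂ) (p q : ℕ) (x : ℕ × ℕ) :
    glsVec (k - 1) (fun j => if j < i then Δ j else Δ (j + 1))
      (fun u v => lam (skipIdx i u) (skipIdx i v)) p q x =
    glsVec k Δ lam (skipIdx i p) (skipIdx i q) (skipIdx i x.1, skipIdx i x.2) := by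
  have hc1 : (x.1 = p ∧
      ((x.2, q) ∈ Xset (k - 1) fun j => if j < i then Δ j else Δ (j + 1)) ∧
        ((p, x.2) ∈ Xtil (k - 1) fun j => if j < i then Δ j else Δ (j + 1))) ↔
      (skipIdx i x.1 = skipIdx i p ∧
        (skipIdx i x.2, skipIdx i q) ∈ Xset k Δ ∧
        (skipIdx i p, skipIdx i x.2) ∈ Xtil k Δ) := by
    constructor
    · rintro ⟨h1, h2, h3⟩
      exact ⟨h1 ▸ rfl, (mem_Xset_skip hik _ _).mp h2, (mem_Xtil_skip hik _ _).mp h3⟩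
    · rintro ⟨h1, h2, h3⟩
      exact ⟨skipIdx_injective i h1, (mem_Xset_skip hik _ _).mpr h2,
        (mem_Xtil_skip hik _ _).mpr h3⟩
  have hc2 : (x.2 = q ∧
      ((x.1, q) ∈ Xtil (k - 1) fun j => if j < i then Δ j else Δ (j + 1)) ∧
        ((p, x.1) ∈ Xset (k - 1) fun j => if j < i then Δ j else Δ (j + 1))) ↔
      (skipIdx i x.2 = skipIdx i q ∧
        (skipIdx i x.1, skipIdx i q) ∈ Xtil k Δ ∧
        (skipIdx i p, skipIdx i x.1) ∈ Xset k Δ) := by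
    constructor
    · rintro ⟨h1, h2, h3⟩
      exact ⟨h1 ▸ rfl, (mem_Xtil_skip hik _ _).mp h2, (mem_Xset_skip hik _ _).mp h3⟩
    · rintro ⟨h1, h2, h3⟩
      exact ⟨skipIdx_injective i h1, (mem_Xtil_skip hik _ _).mpr h2,
        (mem_Xset_skip hik _ _).mpr h3⟩
  classical
  unfold glsVec
  congr 1
  · exact if_congr hc1 rfl rfl
  · exact if_congr hc2 rfl rfl

end Aux

theorem statement18 (k : ℕ) (Δ : ℕ → Segment) (i : ℕ) (hik : i < k)
    (hdet : Detachable k Δ i) (hGLS : GLS k Δ) :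
    GLS (k - 1) (fun j => if j < i then Δ j else Δ (j + 1)) := by
  obtain ⟨lam, hli⟩ := hGLS
  refine ⟨fun u v => lam (skipIdx i u) (skipIdx i v), ?_⟩
  set Δ' : ℕ → Segment := fun j => if j < i then Δ j else Δ (j + 1) with hΔ'
  -- embedding of index sets
  have hmem : ∀ p : ↥(Xset (k - 1) Δ'),
      (skipIdx i p.1.1, skipIdx i p.1.2) ∈ Xset k Δ := by
    intro p
    exact (mem_Xset_skip hik p.1.1 p.1.2).mp p.2
  let e : ↥(Xset (k - 1) Δ') → ↥(Xset k Δ) := fun p => ⟨_, hmem p⟩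
  have he : Function.Injective e := by
    intro p q h
    have h' : (skipIdx i p.1.1, skipIdx i p.1.2) = (skipIdx i q.1.1, skipIdx i q.1.2) :=
      congrArg Subtype.val h
    have h1 := skipIdx_injective i (congrArg Prod.fst h')
    have h2 := skipIdx_injective i (congrArg Prod.snd h')
    exact Subtype.ext (Prod.ext h1 h2)
  have hsub := hli.comp e he
  -- the pullback linear map
  let ψ : ℕ × ℕ → ℕ × ℕ := fun x => (skipIdx i x.1, skipIdx i x.2)
  let R : ((ℕ × ℕ) → ℂ) →ₗ[ℂ] ((ℕ × ℕ) → ℂ) := LinearMap.funLeft ℂ ℂ ψ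
  have hdisj : Disjoint (Submodule.span ℂ
      (Set.range (fun p : ↥(Xset (k - 1) Δ') => glsVec k Δ lam (e p).1.1 (e p).1.2)))
      (LinearMap.ker R) := by
    rw [Submodule.disjoint_def]
    have hsupp : ∀ v ∈ Submodule.span ℂ
        (Set.range (fun p : ↥(Xset (k - 1) Δ') => glsVec k Δ lam (e p).1.1 (e p).1.2)),
        ∀ x : ℕ × ℕ, (x.1 = i ∨ x.2 = i) → v x = 0 := by
      intro v hv
      induction hv using Submodule.span_induction with
      | mem w hw =>
        obtain ⟨p, rfl⟩ := hw
        intro x hx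
        exact glsVec_supp hdet lam _ _ (skipIdx_ne i _) (skipIdx_ne i _) x hx
      | zero => intro x _; rfl
      | add w₁ w₂ _ _ h1 h2 => intro x hx; simp [Pi.add_apply, h1 x hx, h2 x hx]
      | smul c w _ h => intro x hx; simp [Pi.smul_apply, h x hx]
    intro v hv hker
    rw [LinearMap.mem_ker] at hker
    have hsv := hsupp v hv
    funext x
    by_cases hx : x.1 = i ∨ x.2 = i
    · exact hsv x hx
    · push_neg at hx
      obtain ⟨u, hu⟩ := skipIdx_surj i x.1 hx.1
      obtain ⟨w, hw⟩ := skipIdx_surj i x.2 hx.2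
      have := congrFun hker (u, w)
      simpa [R, LinearMap.funLeft, ψ, hu, hw] using this
  have hmap := hsub.map hdisj
  have heq : (fun p : ↥(Xset (k - 1) Δ') =>
      glsVec (k - 1) Δ' (fun u v => lam (skipIdx i u) (skipIdx i v)) p.1.1 p.1.2) =
      R ∘ ((fun p : ↥(Xset k Δ) => glsVec k Δ lam p.1.1 p.1.2) ∘ e) := by
    funext p
    funext x
    exact glsVec_pullback hik lam p.1.1 p.1.2 x
  rw [heq]
  exact hmap
end
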